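/- Let k = 𝔽_q(θ) ⊂ k∞ = 𝔽_q((1/θ)), and for h, l with 0 ≤ h ≤ l−1 define the arithmetic gamma deformation G(q^h/(1−q^l)) := ∏_{i≥1} ∏_{n=0}^{il−1} (1 − t^{q^n}/θ^{q^{il}}) ∈ k∞⟦t⟧ (suitably indexed). Then for every j ≥ 0 there exists b_j ∈ k[t] localized at (t−θ) (i.e. a rational function regular at t=θ) such that ∂_θ^{(j)}(G(q^h/(1−q^l))) = b_j · G(q^h/(1−q^l)), where ∂_θ^{(j)} is the j-th hyperderivative with respect to θ applied coefficientwise. -/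

import Mathlib

/-- Generalized binomial coefficient `C(i, n)` for an integer `i` and natural `n`. -/
def zchoose (i : ℤ) (n : ℕ) : ℤ :=
  if 0 ≤ i then (i.toNat.choose n : ℤ) else (-1) ^ n * (((n : ℤ) - 1 - i).toNat.choose n)

/-- The coefficientwise (product) topology on formal power series. -/
instance powerSeriesPiTopology {K : Type*} [TopologicalSpace K] :
    TopologicalSpace (PowerSeries K) :=
  Pi.topologicalSpace (ι := Unit →₀ ℕ) (Y := fun _ => K)

/-- The element `θ` of `k∞ = 𝔽_q((1/θ))`, realized as the inverse of the variable of
the Laurent series field. -/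
noncomputable def thetaLS (F : Type*) [Field F] : LaurentSeries F :=
  (HahnSeries.single (-1 : ℤ)) (1 : F)

/-- The deformation `G(q^h/(1-q^l)) = ∏_{i≥0} ∏_{n=0}^{il+h-1} (1 - t^{q^n}/θ^{q^{il+h}})`
of the arithmetic gamma value, as a power series in `t` over `k∞`. -/
noncomputable def gammaDeform (F : Type*) [Field F] [Fintype F] (l h : ℕ) :
    PowerSeries (LaurentSeries F) :=
  ∏' i : ℕ, ∏ n ∈ Finset.range (i * l + h),
    (1 - PowerSeries.C (R := LaurentSeries F)
        ((thetaLS F ^ (Fintype.card F) ^ (i * l + h))⁻¹) *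
      (PowerSeries.X : PowerSeries (LaurentSeries F)) ^ (Fintype.card F) ^ n)

/-!
Write `G = A · R`, where `A` is the product of the first `j` factors, a polynomial in `t`
over `𝔽[1/θ]` with `A(θ) ≠ 0`, and every coefficient of `R` is a Laurent series in
`θ^{-q^j}`. The coefficient `C(-s, j)` of `∂_θ^{(j)}` on `θ^{-s}` is `q^j`-periodic in `s`
modulo `p` (as `j < q^j`), so `∂_θ^{(j)}` is linear over such series:
`∂_θ^{(j)} G = ∂_θ^{(j)} A · R`. Hence `A · ∂_θ^{(j)} G = ∂_θ^{(j)} A · G`, and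
`b_j = ∂_θ^{(j)} A / A`.
-/

open Polynomial
open scoped RatFunc

theorem zchoose_eq_choose (i : ℤ) (n : ℕ) : zchoose i n = Ring.choose i n := by
  unfold zchoose
  split_ifs with hi
  · rw [← Ring.choose_natCast, Int.toNat_of_nonneg hi]
  · rw [show i = -(-i) by ring, Ring.choose_neg, ← Ring.choose_natCast,
      Int.toNat_of_nonneg (by omega), Units.smul_def, Int.coe_negOnePow_natCast]
    ring_nf

/-- Lucas-type periodicity, from Vandermonde's identity and `p ∣ C(p^T, m)` for `0 < m < p^T`. -/
theorem zchoose_periodic {F : Type*} [Field F] (p : ℕ) [CharP F p] (hp : p.Prime) {T j : ℕ}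
    (hj : j < p ^ T) :
    Function.Periodic (fun a : ℤ => ((zchoose a j : ℤ) : F)) ((p : ℤ) ^ T) := by
  intro a
  simp only [zchoose_eq_choose]
  rw [Ring.add_choose_eq j (Commute.all _ _), Int.cast_sum, Finset.sum_eq_single (j, 0)]
  · simp
  · rintro ⟨i, m⟩ him hne
    obtain rfl : i + m = j := by simpa using him
    have hm : m ≠ 0 := by rintro rfl; simp at hne
    have hdvd : (p : ℤ) ∣ Ring.choose ((p : ℤ) ^ T) m := by
      rw [← Nat.cast_pow, Ring.choose_natCast]
      exact_mod_cast hp.dvd_choose_pow hm (by omega)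
    rw [Int.cast_mul, (CharP.intCast_eq_zero_iff F p _).mpr hdvd, mul_zero]
  · simp

namespace HahnSeries

variable {Γ R : Type*}

section
variable [PartialOrder Γ] [Semiring R]

def coeffScale (c : Γ → R) : HahnSeries Γ R →+ HahnSeries Γ R where
  toFun x :=
    { coeff := fun s => c s * x.coeff s
      isPWO_support' := x.isPWO_support.mono fun s hs h0 => hs (by simp [h0]) }
  map_zero' := by ext; simp
  map_add' x y := by ext; simp [mul_add]

@[simp]
theorem coeff_coeffScale (c : Γ → R) (x : HahnSeries Γ R) (s : Γ) :
    (coeffScale c x).coeff s = c s * x.coeff s := rfl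

theorem support_coeffScale_subset (c : Γ → R) (x : HahnSeries Γ R) :
    (coeffScale c x).support ⊆ x.support := fun s hs h0 => hs (by simp [h0])

end

theorem coeffScale_mul [AddCommMonoid Γ] [PartialOrder Γ] [IsOrderedCancelAddMonoid Γ]
    [Semiring R] (c : Γ → R) (x y : HahnSeries Γ R)
    (hc : ∀ a b, y.coeff b ≠ 0 → c (a + b) = c a) :
    coeffScale c (x * y) = coeffScale c x * y := by
  classical
  ext s
  rw [coeff_coeffScale, coeff_mul_left' x.isPWO_support (support_coeffScale_subset c x),
    coeff_mul, Finset.mul_sum]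
  refine Finset.sum_congr rfl fun ab hab => ?_
  obtain ⟨-, hb, rfl⟩ := Finset.mem_antidiagonal.mp hab
  rw [coeff_coeffScale, hc ab.1 ab.2 hb, mul_assoc]

end HahnSeries

section Hyperderiv

variable {F : Type*} [Field F]

/-- The hyperderivative `∂_θ^{(j)}` on `𝔽((1/θ))`; the variable of `LaurentSeries F` is
`1/θ`, so that `∂_θ^{(j)} (θ^{-s}) = C(-s, j) θ^{-s-j}`. -/
noncomputable def hyperderiv (j : ℕ) : LaurentSeries F →+ LaurentSeries F :=
  (AddMonoidHom.mulLeft (HahnSeries.single (j : ℤ) 1)).comp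
    (HahnSeries.coeffScale fun s => ((zchoose (-s) j : ℤ) : F))

theorem coeff_hyperderiv (j : ℕ) (x : LaurentSeries F) (m : ℤ) :
    (hyperderiv j x).coeff m = ((zchoose ((j : ℤ) - m) j : ℤ) : F) * x.coeff (m - j) := by
  obtain ⟨n, rfl⟩ : ∃ n, m = n + j := ⟨m - j, by ring⟩
  rw [hyperderiv, AddMonoidHom.comp_apply, AddMonoidHom.coe_mulLeft,
    HahnSeries.coeff_single_mul_add, one_mul, HahnSeries.coeff_coeffScale, add_sub_cancel_right]
  congr 3
  ring

theorem hyperderiv_single (j : ℕ) (r : ℤ) (c : F) :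
    hyperderiv j (HahnSeries.single r c) =
      HahnSeries.single (r + j) (((zchoose (-r) j : ℤ) : F) * c) := by
  ext m
  rw [coeff_hyperderiv]
  rcases eq_or_ne m (r + j) with rfl | hm
  · simp
  · rw [HahnSeries.coeff_single_of_ne hm, HahnSeries.coeff_single_of_ne (by omega), mul_zero]

variable (F) in
def supportDvdSubring (d : ℤ) : Subring (LaurentSeries F) where
  carrier := {y | ∀ s ∈ y.support, d ∣ s}
  mul_mem' {x y} hx hy s hs := by
    obtain ⟨a, ha, b, hb, rfl⟩ := HahnSeries.support_mul_subset hs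
    exact dvd_add (hx a ha) (hy b hb)
  one_mem' s hs := by
    rw [HahnSeries.support_one, Set.mem_singleton_iff] at hs
    exact hs ▸ dvd_zero d
  add_mem' {x y} hx hy s hs := by
    obtain hs | hs := HahnSeries.support_add_subset x y hs
    exacts [hx s hs, hy s hs]
  zero_mem' s hs := by simp at hs
  neg_mem' {x} hx s hs := hx s (by simpa using hs)

theorem mem_supportDvdSubring {d : ℤ} {y : LaurentSeries F} :
    y ∈ supportDvdSubring F d ↔ ∀ s ∈ y.support, d ∣ s := Iff.rfl

theorem isClosed_supportDvdSubring (d : ℤ) :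
    IsClosed (supportDvdSubring F d : Set (LaurentSeries F)) := by
  -- the coefficient maps are continuous for the discrete uniformity on `F`
  let : UniformSpace F := ⊥
  have hcoeff (s : ℤ) : IsClosed {y : LaurentSeries F | y.coeff s = 0} :=
    (isClosed_discrete {0}).preimage (LaurentSeries.uniformContinuous_coeff s).continuous
  have : (supportDvdSubring F d : Set (LaurentSeries F)) =
      ⋂ s ∈ {s | ¬ d ∣ s}, {y | y.coeff s = 0} := by
    ext y
    simp only [SetLike.mem_coe, mem_supportDvdSubring, HahnSeries.mem_support, Set.mem_iInter]
    exact ⟨fun h s hs => by_contra fun h0 => hs (h s h0),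
      fun h s h0 => by_contra fun hs => h0 (h s hs)⟩
  rw [this]
  exact isClosed_biInter fun s _ => hcoeff s

/-- For `d = p^T > j` this is the rule that `∂^{(j)}` is linear over `p^T`-th powers. -/
theorem hyperderiv_mul_of_periodic {j : ℕ} {d : ℤ}
    (hper : Function.Periodic (fun a : ℤ => ((zchoose a j : ℤ) : F)) d)
    (x : LaurentSeries F) {y : LaurentSeries F} (hy : y ∈ supportDvdSubring F d) :
    hyperderiv j (x * y) = hyperderiv j x * y := by
  simp only [hyperderiv, AddMonoidHom.comp_apply, AddMonoidHom.coe_mulLeft, mul_assoc]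
  congr 1
  refine HahnSeries.coeffScale_mul _ _ _ fun a b hb => ?_
  obtain ⟨k, rfl⟩ := hy b hb
  convert hper.int_mul (-k) (-a) using 3
  push_cast
  ring

theorem algebraMap_monomial_eq_single (r : ℕ) (c : F) :
    algebraMap F[X] (LaurentSeries F) (monomial r c) = HahnSeries.single (r : ℤ) c := by
  rw [← C_mul_X_pow_eq_monomial, Polynomial.algebraMap_hahnSeries_apply, Polynomial.coe_mul,
    Polynomial.coe_C, Polynomial.coe_pow, Polynomial.coe_X, map_mul, map_pow,
    HahnSeries.ofPowerSeries_C, HahnSeries.ofPowerSeries_X, HahnSeries.C_apply,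
    HahnSeries.single_pow, HahnSeries.single_mul_single]
  simp

theorem exists_hyperderiv_algebraMap_eq (j : ℕ) (g : F[X]) :
    ∃ g' : F[X], hyperderiv j (algebraMap F[X] (LaurentSeries F) g) =
      algebraMap F[X] (LaurentSeries F) g' := by
  induction g using Polynomial.induction_on' with
  | add f g hf hg =>
    obtain ⟨f', hf'⟩ := hf
    obtain ⟨g', hg'⟩ := hg
    exact ⟨f' + g', by rw [map_add, map_add, hf', hg', map_add]⟩
  | monomial r c =>
    refine ⟨monomial (r + j) (((zchoose (-(r : ℤ)) j : ℤ) : F) * c), ?_⟩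
    rw [algebraMap_monomial_eq_single, algebraMap_monomial_eq_single, hyperderiv_single]
    push_cast
    rfl

end Hyperderiv

theorem Polynomial.exists_coeffwise_lift {R S : Type*} [Semiring R] [Semiring S] (φ : R →+* S)
    (D : S →+ S) (hD : ∀ r, ∃ r', D (φ r) = φ r') (P : R[X]) :
    ∃ P' : R[X], ∀ m, φ (P'.coeff m) = D (φ (P.coeff m)) := by
  induction P using Polynomial.induction_on' with
  | add P Q hP hQ =>
    obtain ⟨P', hP'⟩ := hP
    obtain ⟨Q', hQ'⟩ := hQ
    exact ⟨P' + Q', fun m => by simp only [coeff_add, map_add, hP', hQ']⟩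
  | monomial n r =>
    obtain ⟨r', hr'⟩ := hD r
    refine ⟨monomial n r', fun m => ?_⟩
    simp only [coeff_monomial]
    split_ifs
    exacts [hr'.symm, by simp]

theorem PowerSeries.mk_comp_coeff_mul {R : Type*} [Semiring R] (D : R →+ R) (f g : PowerSeries R)
    (hD : ∀ x m, D (x * coeff m g) = D x * coeff m g) :
    (mk fun m => D (coeff m (f * g))) = (mk fun m => D (coeff m f)) * g := by
  ext m
  simp only [coeff_mk, coeff_mul, map_sum, hD]

theorem PowerSeries.mem_range_map_subtype_iff {R : Type*} [Ring R] {S : Subring R}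
    {f : PowerSeries R} : f ∈ (map S.subtype).range ↔ ∀ m, coeff m f ∈ S := by
  refine ⟨?_, fun h => ⟨f.toSubring S h, f.map_toSubring S h⟩⟩
  rintro ⟨g, rfl⟩ m
  simp

theorem PowerSeries.isClosed_range_map_subtype {R : Type*} [Ring R] [TopologicalSpace R]
    {S : Subring R} (hS : IsClosed (S : Set R)) :
    IsClosed ((map S.subtype).range : Set (PowerSeries R)) := by
  have : ((map S.subtype).range : Set (PowerSeries R)) = ⋂ m, coeff m ⁻¹' S := by
    ext f
    rw [SetLike.mem_coe, mem_range_map_subtype_iff]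
    simp
  rw [this]
  exact isClosed_iInter fun m => hS.preimage (WithPiTopology.continuous_coeff R m)

/-- `powerSeriesPiTopology` is definitionally the scoped topology `PowerSeries.WithPiTopology`. -/
instance instIsTopologicalRingPowerSeries {R : Type*} [TopologicalSpace R] [Ring R]
    [IsTopologicalRing R] :
    IsTopologicalRing (PowerSeries R) :=
  PowerSeries.WithPiTopology.instIsTopologicalRing R

theorem exists_tprod_eq_prod_mul {M ι : Type*} [CommMonoid M] [TopologicalSpace M]
    [ContinuousMul M] {S : Submonoid M} (hS : IsClosed (S : Set M)) {f : ι → M}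
    (hf : Multipliable f) {s : Finset ι} (hs : IsUnit (∏ i ∈ s, f i))
    (hfS : ∀ i ∉ s, f i ∈ S) :
    ∃ r ∈ S, ∏' i, f i = (∏ i ∈ s, f i) * r := by
  classical
  refine ⟨↑hs.unit⁻¹ * ∏' i, f i, ?_, by rw [← mul_assoc, hs.mul_val_inv, one_mul]⟩
  refine hS.mem_of_tendsto (tendsto_const_nhds.mul hf.hasProd) ?_
  filter_upwards [Filter.eventually_ge_atTop s] with t hst
  rw [← Finset.prod_sdiff hst, mul_left_comm, hs.val_inv_mul, mul_one]
  exact S.prod_mem fun i hi => hfS i (Finset.mem_sdiff.mp hi).2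

section Gamma

variable {F : Type*} [Field F]

theorem thetaLS_pow (n : ℕ) : thetaLS F ^ n = HahnSeries.single (-(n : ℤ)) 1 := by
  rw [thetaLS, HahnSeries.single_pow, one_pow, nsmul_eq_mul, mul_neg_one]

theorem inv_thetaLS_pow (n : ℕ) : (thetaLS F ^ n)⁻¹ = HahnSeries.single (n : ℤ) 1 := by
  rw [thetaLS_pow, HahnSeries.inv_single, neg_neg, inv_one]

theorem algebraMap_X_eq_inv_thetaLS : algebraMap F[X] (LaurentSeries F) X = (thetaLS F)⁻¹ := by
  rw [thetaLS, HahnSeries.inv_single, inv_one, neg_neg, Polynomial.algebraMap_hahnSeries_apply,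
    Polynomial.coe_X, HahnSeries.ofPowerSeries_X]

theorem algebraMap_X_pow_eq_inv_thetaLS_pow (n : ℕ) :
    algebraMap F[X] (LaurentSeries F) (X ^ n) = (thetaLS F ^ n)⁻¹ := by
  rw [map_pow, algebraMap_X_eq_inv_thetaLS, inv_pow]

theorem thetaLS_pow_injective : Function.Injective (thetaLS F ^ · : ℕ → LaurentSeries F) := by
  intro a b hab
  have := congrArg HahnSeries.order hab
  simp only [thetaLS_pow, HahnSeries.order_single one_ne_zero, neg_inj, Nat.cast_inj] at this
  exact this

theorem inv_thetaLS_pow_mem_supportDvdSubring {d : ℤ} {n : ℕ} (hdn : d ∣ n) :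
    (thetaLS F ^ n)⁻¹ ∈ supportDvdSubring F d := by
  intro s hs
  rw [inv_thetaLS_pow, HahnSeries.support_single_of_ne one_ne_zero, Set.mem_singleton_iff] at hs
  exact hs ▸ hdn

variable (F) in
noncomputable def toLaurentPowerSeries : F[X][X] →+* PowerSeries (LaurentSeries F) :=
  coeToPowerSeries.ringHom.comp (mapRingHom (algebraMap F[X] (LaurentSeries F)))

theorem toLaurentPowerSeries_apply (P : F[X][X]) :
    toLaurentPowerSeries F P = (P.map (algebraMap F[X] (LaurentSeries F)) : PowerSeries _) :=
  rfl

variable [Fintype F]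

variable (F) in
/-- The `i`-th factor of `gammaDeform`; the variable of the coefficient ring `F[X]` is `1/θ`. -/
noncomputable def gammaFactor (l h i : ℕ) : F[X][X] :=
  ∏ n ∈ Finset.range (i * l + h),
    (1 - C (X ^ Fintype.card F ^ (i * l + h)) * X ^ Fintype.card F ^ n)

theorem toLaurentPowerSeries_gammaFactor (l h i : ℕ) :
    toLaurentPowerSeries F (gammaFactor F l h i) =
      ∏ n ∈ Finset.range (i * l + h),
        (1 - PowerSeries.C ((thetaLS F ^ Fintype.card F ^ (i * l + h))⁻¹) *
          PowerSeries.X ^ Fintype.card F ^ n) := by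
  rw [gammaFactor, map_prod]
  refine Finset.prod_congr rfl fun n _ => ?_
  rw [map_sub, map_one, map_mul, map_pow (toLaurentPowerSeries F), toLaurentPowerSeries_apply,
    toLaurentPowerSeries_apply, map_C, map_X, coe_C, coe_X, algebraMap_X_pow_eq_inv_thetaLS_pow]

theorem gammaDeform_eq_tprod (l h : ℕ) :
    gammaDeform F l h = ∏' i, toLaurentPowerSeries F (gammaFactor F l h i) := by
  simp only [toLaurentPowerSeries_gammaFactor]
  rfl

theorem eval_thetaLS_map_gammaFactor_ne_zero (l h i : ℕ) :
    ((gammaFactor F l h i).map (algebraMap F[X] (LaurentSeries F))).eval (thetaLS F) ≠ 0 := by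
  simp only [gammaFactor, Polynomial.map_prod, eval_prod]
  refine Finset.prod_ne_zero_iff.mpr fun n hn => ?_
  simp only [Polynomial.map_sub, Polynomial.map_one, Polynomial.map_mul, map_C, Polynomial.map_pow,
    map_X, algebraMap_X_pow_eq_inv_thetaLS_pow, eval_sub, eval_one, eval_mul, eval_C, eval_pow,
    eval_X]
  rw [sub_ne_zero, ne_comm, Ne, inv_mul_eq_one₀ (pow_ne_zero _ (by simp [thetaLS]))]
  exact thetaLS_pow_injective.ne
    ((Nat.pow_right_injective Fintype.one_lt_card).ne (Finset.mem_range.mp hn).ne')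

theorem toLaurentPowerSeries_gammaFactor_mem {l h i M : ℕ} (hM : M ≤ i * l + h) :
    toLaurentPowerSeries F (gammaFactor F l h i) ∈
      (PowerSeries.map (supportDvdSubring F ((Fintype.card F : ℤ) ^ M)).subtype).range := by
  rw [toLaurentPowerSeries_gammaFactor]
  refine Subring.prod_mem _ fun n _ => Subring.sub_mem _ (Subring.one_mem _) ?_
  refine PowerSeries.mem_range_map_subtype_iff.mpr fun m => ?_
  rw [PowerSeries.coeff_C_mul_X_pow]
  split_ifs
  · exact inv_thetaLS_pow_mem_supportDvdSubring (by exact_mod_cast pow_dvd_pow _ hM)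
  · exact Subring.zero_mem _

theorem constantCoeff_toLaurentPowerSeries_gammaFactor (l h i : ℕ) :
    PowerSeries.constantCoeff (toLaurentPowerSeries F (gammaFactor F l h i)) = 1 := by
  rw [toLaurentPowerSeries_gammaFactor, map_prod]
  refine Finset.prod_eq_one fun n _ => ?_
  simp [Fintype.card_ne_zero]

/-- The factors with `i ≥ M` have coefficients in the closed subring `𝔽((θ^{-q^M}))`, hence so
does their product. If the product does not converge, `∏'` is `1`. -/
theorem exists_gammaDeform_eq_mul (l h : ℕ) (hl : 0 < l) (M : ℕ) :
    ∃ A : F[X][X], (A.map (algebraMap F[X] (LaurentSeries F))).eval (thetaLS F) ≠ 0 ∧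
      ∃ R ∈ (PowerSeries.map (supportDvdSubring F ((Fintype.card F : ℤ) ^ M)).subtype).range,
        gammaDeform F l h = toLaurentPowerSeries F A * R := by
  set S := (PowerSeries.map (supportDvdSubring F ((Fintype.card F : ℤ) ^ M)).subtype).range
  rw [gammaDeform_eq_tprod]
  by_cases hG : Multipliable fun i => toLaurentPowerSeries F (gammaFactor F l h i)
  · have hunit :
        IsUnit (∏ i ∈ Finset.range M, toLaurentPowerSeries F (gammaFactor F l h i)) := by
      rw [PowerSeries.isUnit_iff_constantCoeff, map_prod,
        Finset.prod_eq_one fun i _ => constantCoeff_toLaurentPowerSeries_gammaFactor l h i]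
      exact isUnit_one
    obtain ⟨R, hR, hGR⟩ := exists_tprod_eq_prod_mul (S := S.toSubmonoid)
      (PowerSeries.isClosed_range_map_subtype (isClosed_supportDvdSubring _)) hG hunit
      fun i hi => toLaurentPowerSeries_gammaFactor_mem (by
        have := Finset.mem_range.not.mp hi
        nlinarith)
    refine ⟨∏ i ∈ Finset.range M, gammaFactor F l h i, ?_, R, hR, by rw [hGR, map_prod]⟩
    rw [Polynomial.map_prod, eval_prod]
    exact Finset.prod_ne_zero_iff.mpr fun i _ => eval_thetaLS_map_gammaFactor_ne_zero l h i
  · refine ⟨1, by simp, 1, S.one_mem, ?_⟩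
    rw [tprod_eq_one_of_not_multipliable hG, map_one, one_mul]

end Gamma

theorem gammaDeform_theta_hyperderiv_general {F : Type*} [Field F] [Fintype F]
    (l h : ℕ) (hl : 0 < l)
    (Dθ : ℕ → LaurentSeries F → LaurentSeries F)
    (hDθ : ∀ (j : ℕ) (f : LaurentSeries F) (m : ℤ),
      (Dθ j f).coeff m = ((zchoose ((j : ℤ) - m) j : ℤ) : F) * f.coeff (m - j))
    (j : ℕ) :
    ∃ P Q : Polynomial (RatFunc F),
      Q ≠ 0 ∧
      Polynomial.eval (thetaLS F)
        (Q.map (@algebraMap (RatFunc F) (LaurentSeries F) _ _ (RatFunc.liftAlgebra F (LaurentSeries F)))) ≠ 0 ∧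
      ((Q.map (@algebraMap (RatFunc F) (LaurentSeries F) _ _ (RatFunc.liftAlgebra F (LaurentSeries F))) : Polynomial (LaurentSeries F)) :
          PowerSeries (LaurentSeries F)) *
        (PowerSeries.mk fun m => Dθ j (PowerSeries.coeff (R := LaurentSeries F) m
            (gammaDeform F l h))) =
      ((P.map (@algebraMap (RatFunc F) (LaurentSeries F) _ _ (RatFunc.liftAlgebra F (LaurentSeries F))) : Polynomial (LaurentSeries F)) :
          PowerSeries (LaurentSeries F)) * gammaDeform F l h := by
  obtain ⟨e, hp, hcard⟩ := FiniteField.card F (ringChar F)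
  have hper : Function.Periodic (fun a : ℤ => ((zchoose a j : ℤ) : F))
      ((Fintype.card F : ℤ) ^ j) := by
    have hj : j < ringChar F ^ (e * j) := by
      rw [pow_mul, ← hcard]
      exact Nat.lt_pow_self Fintype.one_lt_card
    simpa [hcard, pow_mul] using zchoose_periodic (F := F) (ringChar F) hp hj
  have hD : Dθ j = hyperderiv j :=
    funext fun x => HahnSeries.ext (funext fun m => by rw [hDθ, coeff_hyperderiv])
  have hmap (P : F[X][X]) : (P.map (algebraMap F[X] (RatFunc F))).map
      (algebraMap (RatFunc F) (LaurentSeries F)) = P.map (algebraMap F[X] (LaurentSeries F)) := by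
    rw [Polynomial.map_map, ← IsScalarTower.algebraMap_eq]
  obtain ⟨A, hA, R, hR, hGR⟩ := exists_gammaDeform_eq_mul (F := F) l h hl j
  obtain ⟨A', hA'⟩ := Polynomial.exists_coeffwise_lift _ (hyperderiv j)
    (exists_hyperderiv_algebraMap_eq j) A
  refine ⟨A'.map (algebraMap F[X] (RatFunc F)), A.map (algebraMap F[X] (RatFunc F)), ?_, ?_, ?_⟩
  · rintro hQ
    simp [← hmap, hQ] at hA
  · rwa [hmap]
  · have hDA : (PowerSeries.mk fun m => hyperderiv j (PowerSeries.coeff m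
        (toLaurentPowerSeries F A))) = toLaurentPowerSeries F A' := by
      ext m
      simp [toLaurentPowerSeries_apply, hA']
    rw [hmap, hmap, ← toLaurentPowerSeries_apply, ← toLaurentPowerSeries_apply, hD, hGR,
      PowerSeries.mk_comp_coeff_mul _ _ _ fun x m =>
        hyperderiv_mul_of_periodic hper x (PowerSeries.mem_range_map_subtype_iff.mp hR m), hDA]
    ring

/-- For each `j ≥ 0` there is `b_j ∈ k[t]_{(t-θ)}` (a rational function `P/Q` with
`Q(θ) ≠ 0`, `k = 𝔽_q(θ)`) such that `∂_θ^{(j)} G(q^h/(1-q^l)) = b_j · G(q^h/(1-q^l))`,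
where `∂_θ^{(j)}` is the `j`-th hyperderivative in `θ` applied coefficientwise. -/
theorem gammaDeform_theta_hyperderiv {F : Type*} [Field F] [Fintype F]
    (l h : ℕ) (hl : 0 < l) (hh : h ≤ l - 1)
    (Dθ : ℕ → LaurentSeries F → LaurentSeries F)
    (hDθ : ∀ (j : ℕ) (f : LaurentSeries F) (m : ℤ),
      (Dθ j f).coeff m = ((zchoose ((j : ℤ) - m) j : ℤ) : F) * f.coeff (m - j))
    (j : ℕ) :
    ∃ P Q : Polynomial (RatFunc F),
      Q ≠ 0 ∧
      Polynomial.eval (thetaLS F)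
        (Q.map (@algebraMap (RatFunc F) (LaurentSeries F) _ _ (RatFunc.liftAlgebra F (LaurentSeries F)))) ≠ 0 ∧
      ((Q.map (@algebraMap (RatFunc F) (LaurentSeries F) _ _ (RatFunc.liftAlgebra F (LaurentSeries F))) : Polynomial (LaurentSeries F)) :
          PowerSeries (LaurentSeries F)) *
        (PowerSeries.mk fun m => Dθ j (PowerSeries.coeff (R := LaurentSeries F) m
            (gammaDeform F l h))) =
      ((P.map (@algebraMap (RatFunc F) (LaurentSeries F) _ _ (RatFunc.liftAlgebra F (LaurentSeries F))) : Polynomial (LaurentSeries F)) :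
          PowerSeries (LaurentSeries F)) * gammaDeform F l h :=
  gammaDeform_theta_hyperderiv_general l h hl Dθ hDθ j
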